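/- The discrete symplectic system is definite on ℕ₀ if and only if there exists a finite discrete interval I ⊂ ℕ₀ on which the system is definite. -/

import Mathlib

open Matrix
open scoped ComplexOrder

/-!
The transfer matrices `𝕊_k(λ)` are invertible, since `Ψ_k J Ψ_k = 0` makes `J Ψ_k`
nilpotent, so a solution is determined by `z 0`. If `Ψ_k z_k = 0` for `k ≤ N`, then `z` also
solves the `λ`-free system `z_k = S_k z_{k+1}` on `[0, N]`, so `z 0` lies in the subspace of
initial values whose `λ = 0` solution is annihilated by `Ψ_0, …, Ψ_N`. If the system is definite
on no `[0, N]`, these form a decreasing chain of nonzero subspaces of `ℂ^{2n}`; it stabilizes,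
and a nonzero vector in the limit gives a nontrivial `λ = 0` solution with
`Σ z_k* Ψ_k z_k = 0` on all of `ℕ₀`.
-/

theorem ENNReal.tsum_ofReal_pos_of_sum_pos {α : Type*} {f : α → ℝ} {s : Finset α}
    (h : 0 < ∑ k ∈ s, f k) : 0 < ∑' k, ENNReal.ofReal (f k) := by
  obtain ⟨k, -, hk⟩ := Finset.exists_lt_of_sum_lt (f := 0) (g := f) (by simpa using h)
  exact (ENNReal.ofReal_pos.mpr hk).trans_le (ENNReal.le_tsum k)

namespace Matrix

variable {m : Type*} [Fintype m]

theorem PosSemidef.re_dotProduct_mulVec_nonneg {A : Matrix m m ℂ}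
    (hA : A.PosSemidef) (x : m → ℂ) : 0 ≤ (star x ⬝ᵥ (A *ᵥ x)).re :=
  (Complex.le_def.mp (hA.dotProduct_mulVec_nonneg x)).1

theorem PosSemidef.mulVec_eq_zero_of_re_dotProduct_eq_zero {A : Matrix m m ℂ}
    (hA : A.PosSemidef) {x : m → ℂ} (h : (star x ⬝ᵥ (A *ᵥ x)).re = 0) : A *ᵥ x = 0 :=
  (hA.dotProduct_mulVec_zero_iff x).mp
    (Complex.ext h (Complex.le_def.mp (hA.dotProduct_mulVec_nonneg x)).2.symm)

theorem mulVec_eq_zero_of_sum_re_dotProduct_nonpos {ι : Type*} {Ψ : ι → Matrix m m ℂ}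
    (hΨ : ∀ k, (Ψ k).PosSemidef) {z : ι → m → ℂ} {s : Finset ι}
    (h : ∑ k ∈ s, (star (z k) ⬝ᵥ (Ψ k *ᵥ z k)).re ≤ 0) :
    ∀ k ∈ s, Ψ k *ᵥ z k = 0 := by
  have hnonneg k (_ : k ∈ s) := (hΨ k).re_dotProduct_mulVec_nonneg (z k)
  have hzero := (Finset.sum_eq_zero_iff_of_nonneg hnonneg).mp
    (le_antisymm h (Finset.sum_nonneg hnonneg))
  exact fun k hk => (hΨ k).mulVec_eq_zero_of_re_dotProduct_eq_zero (hzero k hk)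

theorem isUnit_of_conjTranspose_mul_mul_self_eq {R : Type*} [CommRing R] [StarRing R]
    [DecidableEq m] {J A : Matrix m m R} (hJ : IsUnit J) (h : Aᴴ * J * A = J) : IsUnit A :=
  isUnit_of_mul_isUnit_right (h.symm ▸ hJ : IsUnit (Aᴴ * J * A))

theorem isUnit_fromBlocks_zero_one_neg_one_zero {l R : Type*} [Fintype l] [DecidableEq l]
    [CommRing R] : IsUnit (fromBlocks 0 1 (-1) 0 : Matrix (l ⊕ l) (l ⊕ l) R) := by
  have h : (fromBlocks 0 1 (-1) 0 : Matrix (l ⊕ l) (l ⊕ l) R) = -J l R := by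
    simp [J, fromBlocks_neg]
  rw [h, IsUnit.neg_iff, isUnit_iff_isUnit_det]
  exact isUnit_det_J l R

end Matrix

theorem Submodule.iInf_ne_bot_of_antitone {K V : Type*} [DivisionRing K] [AddCommGroup V]
    [Module K V] [FiniteDimensional K V] {W : ℕ → Submodule K V} (hW : Antitone W)
    (hne : ∀ N, W N ≠ ⊥) : ⨅ N, W N ≠ ⊥ := by
  obtain ⟨N₀, hN₀⟩ :=
    IsArtinian.monotone_stabilizes ⟨fun N => OrderDual.toDual (W N), hW⟩
  have h : W N₀ ≤ ⨅ N, W N := le_iInf fun N =>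
    (le_total N N₀).elim (hW ·) fun h => le_of_eq (hN₀ N h)
  exact fun hbot => hne N₀ (eq_bot_iff.mpr (hbot ▸ h))

namespace DiscreteSymplecticSystem

variable {m : Type*} [Fintype m] {J : Matrix m m ℂ} {S Ψ : ℕ → Matrix m m ℂ}

/-- The paper's `𝕊_k(λ)`. -/
def transfer (J : Matrix m m ℂ) (S Ψ : ℕ → Matrix m m ℂ) (l : ℂ) (k : ℕ) : Matrix m m ℂ :=
  S k - l • (J * Ψ k * S k)

def IsSolution (J : Matrix m m ℂ) (S Ψ : ℕ → Matrix m m ℂ) (l : ℂ) (z : ℕ → m → ℂ) :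
    Prop :=
  ∀ k, z k = transfer J S Ψ l k *ᵥ z (k + 1)

theorem transfer_zero (k : ℕ) : transfer J S Ψ 0 k = S k := by
  simp [transfer]

theorem transfer_mulVec_of_mulVec_eq_zero {l : ℂ} {k : ℕ} {x : m → ℂ}
    (hΨJ : Ψ k * J * Ψ k = 0) (h : Ψ k *ᵥ (transfer J S Ψ l k *ᵥ x) = 0) :
    transfer J S Ψ l k *ᵥ x = S k *ᵥ x := by
  have hΨT : Ψ k * transfer J S Ψ l k = Ψ k * S k := by
    rw [transfer, Matrix.mul_sub, Matrix.mul_smul, ← Matrix.mul_assoc, ← Matrix.mul_assoc,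
      hΨJ, Matrix.zero_mul, smul_zero, sub_zero]
  rw [mulVec_mulVec, hΨT, ← mulVec_mulVec] at h
  rw [transfer, sub_mulVec, smul_mulVec, Matrix.mul_assoc, ← mulVec_mulVec, ← mulVec_mulVec,
    h, mulVec_zero, smul_zero, sub_zero]

variable [DecidableEq m]

theorem isUnit_transfer {l : ℂ} {k : ℕ} (hS : IsUnit (S k)) (hΨJ : Ψ k * J * Ψ k = 0) :
    IsUnit (transfer J S Ψ l k) := by
  have hnil : IsNilpotent (l • (J * Ψ k)) :=
    ⟨2, by rw [pow_two, smul_mul_smul_comm, Matrix.mul_assoc, ← Matrix.mul_assoc (Ψ k), hΨJ,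
      Matrix.mul_zero, smul_zero]⟩
  have h : transfer J S Ψ l k = (1 - l • (J * Ψ k)) * S k := by
    rw [transfer, Matrix.sub_mul, Matrix.one_mul, Matrix.smul_mul]
  exact h ▸ hnil.isUnit_one_sub.mul hS

theorem IsSolution.eq_zero_of_apply_zero {l : ℂ} {z : ℕ → m → ℂ}
    (hT : ∀ k, IsUnit (transfer J S Ψ l k)) (hz : IsSolution J S Ψ l z) (h0 : z 0 = 0) :
    z = 0 := by
  funext k
  induction k with
  | zero => exact h0
  | succ k ih =>
    refine mulVec_injective_of_isUnit (hT k) ?_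
    rw [← hz k, ih, Pi.zero_apply, Pi.zero_apply, mulVec_zero]

noncomputable def propagator (S : ℕ → Matrix m m ℂ) : ℕ → Matrix m m ℂ
  | 0 => 1
  | k + 1 => (S k)⁻¹ * propagator S k

@[simp]
theorem propagator_zero : propagator S 0 = 1 := rfl

theorem propagator_succ (k : ℕ) : propagator S (k + 1) = (S k)⁻¹ * propagator S k := rfl

theorem isSolution_zero_propagator_mulVec (hS : ∀ k, IsUnit (S k)) (c : m → ℂ) :
    IsSolution J S Ψ 0 (fun k => propagator S k *ᵥ c) := by
  intro k
  dsimp only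
  rw [transfer_zero, propagator_succ, mulVec_mulVec, ← Matrix.mul_assoc,
    mul_nonsing_inv _ ((isUnit_iff_isUnit_det _).mp (hS k)), Matrix.one_mul]

theorem eq_propagator_mulVec {z : ℕ → m → ℂ} {N : ℕ} (hS : ∀ k, IsUnit (S k))
    (hz : ∀ k < N, z k = S k *ᵥ z (k + 1)) : ∀ k ≤ N, z k = propagator S k *ᵥ z 0 := by
  intro k hk
  induction k with
  | zero => rw [propagator_zero, one_mulVec]
  | succ k ih =>
    rw [propagator_succ, ← mulVec_mulVec, ← ih (by omega), hz k hk, mulVec_mulVec,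
      nonsing_inv_mul _ ((isUnit_iff_isUnit_det _).mp (hS k)), one_mulVec]

noncomputable def nullInitials (S Ψ : ℕ → Matrix m m ℂ) (N : ℕ) : Submodule ℂ (m → ℂ) :=
  ⨅ k ≤ N, LinearMap.ker (Ψ k * propagator S k).mulVecLin

theorem mem_nullInitials {N : ℕ} {c : m → ℂ} :
    c ∈ nullInitials S Ψ N ↔ ∀ k ≤ N, Ψ k *ᵥ (propagator S k *ᵥ c) = 0 := by
  simp [nullInitials, Submodule.mem_iInf, mulVec_mulVec]

theorem nullInitials_antitone : Antitone (nullInitials S Ψ) := fun _ _ hNN' _ hc =>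
  mem_nullInitials.mpr fun k hk => mem_nullInitials.mp hc k (hk.trans hNN')

theorem nullInitials_ne_bot {N : ℕ} {l : ℂ} {z : ℕ → m → ℂ} (hS : ∀ k, IsUnit (S k))
    (hΨJ : ∀ k, Ψ k * J * Ψ k = 0) (hz : IsSolution J S Ψ l z) (hz0 : z ≠ 0)
    (hΨz : ∀ k ≤ N, Ψ k *ᵥ z k = 0) : nullInitials S Ψ N ≠ ⊥ := by
  have hfree : ∀ k < N + 1, z k = S k *ᵥ z (k + 1) := fun k hk => by
    rw [hz k, transfer_mulVec_of_mulVec_eq_zero (hΨJ k) (hz k ▸ hΨz k (by omega))]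
  have hprop := eq_propagator_mulVec hS hfree
  refine (Submodule.ne_bot_iff _).mpr ⟨z 0, mem_nullInitials.mpr fun k hk => ?_, ?_⟩
  · rw [← hprop k (by omega), hΨz k hk]
  · exact fun h0 => hz0 (hz.eq_zero_of_apply_zero (fun k => isUnit_transfer (hS k) (hΨJ k)) h0)

theorem exists_isSolution_zero_forall_mulVec_eq_zero (hS : ∀ k, IsUnit (S k))
    (hΨJ : ∀ k, Ψ k * J * Ψ k = 0)
    (h : ∀ N, ∃ l z, IsSolution J S Ψ l z ∧ z ≠ 0 ∧ ∀ k ≤ N, Ψ k *ᵥ z k = 0) :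
    ∃ z, IsSolution J S Ψ 0 z ∧ z ≠ 0 ∧ ∀ k, Ψ k *ᵥ z k = 0 := by
  have hne : ⨅ N, nullInitials S Ψ N ≠ ⊥ := by
    refine Submodule.iInf_ne_bot_of_antitone nullInitials_antitone fun N => ?_
    obtain ⟨l, z, hz, hz0, hΨz⟩ := h N
    exact nullInitials_ne_bot hS hΨJ hz hz0 hΨz
  obtain ⟨c, hc, hc0⟩ := (Submodule.ne_bot_iff _).mp hne
  refine ⟨_, isSolution_zero_propagator_mulVec hS c, fun h0 => hc0 ?_, fun k => ?_⟩
  · simpa using congrFun h0 0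
  · exact mem_nullInitials.mp (Submodule.mem_iInf _ |>.mp hc k) k le_rfl

end DiscreteSymplecticSystem

/-- Lemma 3.3: the system is definite on `ℕ₀` iff it is definite on some finite
discrete interval. -/
theorem stmt15 (n : ℕ)
    (J : Matrix (Fin n ⊕ Fin n) (Fin n ⊕ Fin n) ℂ)
    (hJ : J = Matrix.fromBlocks 0 1 (-1) 0)
    (S Ψ : ℕ → Matrix (Fin n ⊕ Fin n) (Fin n ⊕ Fin n) ℂ)
    (hS : ∀ k : ℕ, (S k)ᴴ * J * S k = J)
    (hΨpsd : ∀ k : ℕ, (Ψ k).PosSemidef)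
    (hΨJ : ∀ k : ℕ, Ψ k * J * Ψ k = 0) :
    (∀ (l : ℂ) (z : ℕ → (Fin n ⊕ Fin n) → ℂ),
        (∀ k : ℕ, z k = (S k - l • (J * Ψ k * S k)) *ᵥ z (k + 1)) → z ≠ 0 →
        0 < ∑' k : ℕ, ENNReal.ofReal ((star (z k) ⬝ᵥ (Ψ k *ᵥ z k)).re)) ↔
      (∃ a b : ℕ, ∀ (l : ℂ) (z : ℕ → (Fin n ⊕ Fin n) → ℂ),
        (∀ k : ℕ, z k = (S k - l • (J * Ψ k * S k)) *ᵥ z (k + 1)) → z ≠ 0 →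
        0 < ∑ k ∈ Finset.Icc a b, ((star (z k) ⬝ᵥ (Ψ k *ᵥ z k)).re)) := by
  have hSunit k : IsUnit (S k) :=
    isUnit_of_conjTranspose_mul_mul_self_eq (hJ ▸ isUnit_fromBlocks_zero_one_neg_one_zero)
      (hS k)
  constructor
  · intro hdef
    by_contra hfin
    push Not at hfin
    obtain ⟨z, hz, hz0, hΨz⟩ :=
      DiscreteSymplecticSystem.exists_isSolution_zero_forall_mulVec_eq_zero hSunit hΨJ fun N => by
        obtain ⟨l, z, hz, hz0, hsum⟩ := hfin 0 N
        refine ⟨l, z, hz, hz0, fun k hk => ?_⟩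
        exact mulVec_eq_zero_of_sum_re_dotProduct_nonpos hΨpsd hsum k (by simp [hk])
    simpa [hΨz] using hdef 0 z hz hz0
  · rintro ⟨a, b, hab⟩ l z hz hz0
    exact ENNReal.tsum_ofReal_pos_of_sum_pos (hab l z hz hz0)
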